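/- For every entire function p : ℂ → ℂ and every natural number n ≥ 0, the function g = Q̄ⁿ(p(z)·exp(−b|z|²/4)) (the n-fold application of the creation operator Q̄) satisfies L g(x) = (2n+1)·b·g(x) for every x ∈ ℝ²; thus every Landau level Λ_{n+1} = (2n+1)·b admits smooth eigenfunctions of the Landau Hamiltonian. -/

import Mathlib

open MeasureTheory Complex

/-- Directional (real) partial derivative of `f : ℂ → ℂ` in the direction `v`. -/
noncomputable def pd (f : ℂ → ℂ) (v : ℂ) (z : ℂ) : ℂ := fderiv ℝ f z v

/-- Wirtinger derivative `∂_z f = ½(∂₁ f − i ∂₂ f)`. -/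
noncomputable def wdz (f : ℂ → ℂ) (z : ℂ) : ℂ := (pd f 1 z - I * pd f I z) / 2

/-- Wirtinger derivative `∂_z̄ f = ½(∂₁ f + i ∂₂ f)`. -/
noncomputable def wdzbar (f : ℂ → ℂ) (z : ℂ) : ℂ := (pd f 1 z + I * pd f I z) / 2

/-- Annihilation operator `Q f = −2i (∂_z̄ f + (bz/4) f)`. -/
noncomputable def annQ (b : ℝ) (f : ℂ → ℂ) (z : ℂ) : ℂ :=
  -2 * I * (wdzbar f z + ((b : ℂ) * z / 4) * f z)

/-- Creation operator `Q̄ f = −2i (∂_z f − (b z̄/4) f)`. -/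
noncomputable def creQ (b : ℝ) (f : ℂ → ℂ) (z : ℂ) : ℂ :=
  -2 * I * (wdz f z - ((b : ℂ) * (starRingEnd ℂ z) / 4) * f z)

/-- The Landau Hamiltonian
`L f = −Δf + i b (x₁ ∂₂ f − x₂ ∂₁ f) + (b²/4)(x₁² + x₂²) f` on `ℝ² ≃ ℂ`. -/
noncomputable def landau (b : ℝ) (f : ℂ → ℂ) (z : ℂ) : ℂ :=
  -(pd (pd f 1) 1 z + pd (pd f I) I z)
    + I * (b : ℂ) * ((z.re : ℂ) * pd f I z - (z.im : ℂ) * pd f 1 z)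
    + ((b : ℂ) ^ 2 / 4) * ((z.re : ℂ) ^ 2 + (z.im : ℂ) ^ 2) * f z

/-!
With `Q̄Q` and `QQ̄` expanded in real partial derivatives, symmetry of second derivatives gives
`L = Q̄Q + b` and `QQ̄ = Q̄Q + 2b` on `C²` functions. Since `p` is holomorphic and
`∂_z̄ e^{-b|z|²/4} = -(bz/4) e^{-b|z|²/4}`, the operator `Q` annihilates `φ = p e^{-b|z|²/4}`.
The commutation relation then gives `Q Q̄ⁿ⁺¹ φ = 2(n+1)b Q̄ⁿ φ` by induction, whence
`L Q̄ⁿ φ = Q̄ Q Q̄ⁿ φ + b Q̄ⁿ φ = (2n+1)b Q̄ⁿ φ`.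
-/

open Complex ComplexConjugate
open scoped ContDiff

section PartialDerivative

variable {f g : ℂ → ℂ} {z : ℂ}

theorem pd_add (hf : DifferentiableAt ℝ f z) (hg : DifferentiableAt ℝ g z) (v : ℂ) :
    pd (fun w => f w + g w) v z = pd f v z + pd g v z := by
  simp [pd, fderiv_fun_add hf hg]

theorem pd_sub (hf : DifferentiableAt ℝ f z) (hg : DifferentiableAt ℝ g z) (v : ℂ) :
    pd (fun w => f w - g w) v z = pd f v z - pd g v z := by
  simp [pd, fderiv_fun_sub hf hg]

theorem pd_mul (hf : DifferentiableAt ℝ f z) (hg : DifferentiableAt ℝ g z) (v : ℂ) :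
    pd (fun w => f w * g w) v z = f z * pd g v z + pd f v z * g z := by
  simp [pd, fderiv_fun_mul hf hg, mul_comm]

theorem pd_const_mul (hf : DifferentiableAt ℝ f z) (c : ℂ) (v : ℂ) :
    pd (fun w => c * f w) v z = c * pd f v z := by
  simp [pd, fderiv_const_mul hf]

theorem pd_div_const (hf : DifferentiableAt ℝ f z) (c : ℂ) (v : ℂ) :
    pd (fun w => f w / c) v z = pd f v z / c := by
  simp [pd, div_eq_mul_inv, fderiv_mul_const hf, mul_comm]

theorem pd_const_smul (hf : DifferentiableAt ℝ f z) (c : ℂ) (v : ℂ) :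
    pd (c • f) v z = c * pd f v z := by
  simp [pd, fderiv_const_smul hf]

theorem pd_const (c v z : ℂ) : pd (fun _ => c) v z = 0 := by
  simp [pd]

theorem pd_id (v z : ℂ) : pd (fun w => w) v z = v := by
  simp [pd]

theorem pd_const_mul_id (c v z : ℂ) : pd (fun w => c * w) v z = c * v := by
  rw [pd_const_mul (f := fun w => w) differentiableAt_fun_id, pd_id]

theorem pd_conj (v z : ℂ) : pd conj v z = conj v := by
  change fderiv ℝ conjCLE z v = _
  rw [conjCLE.fderiv]
  rfl

theorem pd_cexp (hf : DifferentiableAt ℝ f z) (v : ℂ) :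
    pd (fun w => exp (f w)) v z = exp (f z) * pd f v z := by
  simp [pd, (hf.hasFDerivAt.cexp).fderiv]

theorem pd_eq_mul_deriv (hf : DifferentiableAt ℂ f z) (v : ℂ) : pd f v z = v * deriv f z := by
  simp [pd, hf.fderiv_restrictScalars ℝ]

theorem ContDiff.pd {m n : WithTop ℕ∞} (hf : ContDiff ℝ n f) (hmn : m + 1 ≤ n) (v : ℂ) :
    ContDiff ℝ m (pd f v) :=
  (hf.fderiv_right hmn).clm_apply contDiff_const

theorem pd_pd_comm (hf : ContDiff ℝ 2 f) (v w z : ℂ) : pd (pd f v) w z = pd (pd f w) v z := by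
  have hdf : DifferentiableAt ℝ (fderiv ℝ f) z :=
    (hf.fderiv_right (m := 1) le_rfl).differentiable one_ne_zero z
  have h (v w : ℂ) : pd (pd f v) w z = fderiv ℝ (fderiv ℝ f) z w v := by
    change fderiv ℝ (fun z => fderiv ℝ f z v) z w = _
    simp [fderiv_clm_apply hdf (differentiableAt_const v)]
  rw [h, h, (hf.contDiffAt.isSymmSndFDerivAt (by simp)).eq]

end PartialDerivative

section LadderOperators

variable {b : ℝ} {f : ℂ → ℂ}

theorem pd_creQ (hf : ContDiff ℝ 2 f) (v z : ℂ) :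
    pd (creQ b f) v z = -2 * I * ((pd (pd f 1) v z - I * pd (pd f I) v z) / 2
      - b * conj v / 4 * f z - b * conj z / 4 * pd f v z) := by
  have hf1 : Differentiable ℝ (pd f 1) := (hf.pd (m := 1) le_rfl 1).differentiable one_ne_zero
  have hfI : Differentiable ℝ (pd f I) := (hf.pd (m := 1) le_rfl I).differentiable one_ne_zero
  have hfd : Differentiable ℝ f := hf.differentiable two_ne_zero
  have hc : Differentiable ℝ (conj : ℂ → ℂ) := conjCLE.differentiable
  unfold creQ wdz
  simp (disch := fun_prop) only [pd_const_mul, pd_sub, pd_mul, pd_div_const, pd_conj]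
  ring

theorem pd_annQ (hf : ContDiff ℝ 2 f) (v z : ℂ) :
    pd (annQ b f) v z = -2 * I * ((pd (pd f 1) v z + I * pd (pd f I) v z) / 2
      + b * v / 4 * f z + b * z / 4 * pd f v z) := by
  have hf1 : Differentiable ℝ (pd f 1) := (hf.pd (m := 1) le_rfl 1).differentiable one_ne_zero
  have hfI : Differentiable ℝ (pd f I) := (hf.pd (m := 1) le_rfl I).differentiable one_ne_zero
  have hfd : Differentiable ℝ f := hf.differentiable two_ne_zero
  unfold annQ wdzbar
  simp (disch := fun_prop) only [pd_const_mul, pd_add, pd_mul, pd_div_const, pd_const_mul_id]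
  ring

theorem annQ_creQ_eq_creQ_annQ_add (hf : ContDiff ℝ 2 f) (z : ℂ) :
    annQ b (creQ b f) z = creQ b (annQ b f) z + 2 * b * f z := by
  simp only [annQ, creQ, wdz, wdzbar, pd_creQ hf, pd_annQ hf, pd_pd_comm hf I 1, map_one, conj_I]
  ring_nf
  simp only [I_sq, I_pow_three, I_pow_four]
  ring

theorem landau_eq_creQ_annQ_add (hf : ContDiff ℝ 2 f) (z : ℂ) :
    landau b f z = creQ b (annQ b f) z + b * f z := by
  simp only [landau, creQ, annQ, wdz, wdzbar, pd_annQ hf, pd_pd_comm hf I 1,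
    re_eq_add_conj, im_eq_sub_conj, mul_inv, div_eq_mul_inv, inv_I]
  ring_nf
  simp only [I_sq, I_pow_three, I_pow_four]
  ring

theorem contDiff_creQ {m n : WithTop ℕ∞} (hf : ContDiff ℝ n f) (hmn : m + 1 ≤ n) :
    ContDiff ℝ m (creQ b f) := by
  have hf1 := hf.pd hmn 1
  have hfI := hf.pd hmn I
  have hfm := hf.of_le (le_self_add.trans hmn)
  have hc : ContDiff ℝ m (conj : ℂ → ℂ) := conjCLE.contDiff
  unfold creQ wdz
  fun_prop

theorem creQ_zero : creQ b 0 = 0 := by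
  funext z
  simp [creQ, wdz, pd]

theorem creQ_const_smul (hf : Differentiable ℝ f) (c : ℂ) : creQ b (c • f) = c • creQ b f := by
  funext z
  simp only [creQ, wdz, pd_const_smul (hf z), Pi.smul_apply, smul_eq_mul]
  ring

end LadderOperators

section GroundStates

variable {b : ℝ} {p : ℂ → ℂ}

theorem ofReal_neg_gaussian_exponent (b : ℝ) (z : ℂ) :
    (-((b * ‖z‖ ^ 2 / 4 : ℝ) : ℂ)) = -(b : ℂ) / 4 * (z * conj z) := by
  rw [mul_conj, normSq_eq_norm_sq]
  push_cast
  ring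

theorem contDiff_mul_gaussian (hp : Differentiable ℂ p) :
    ContDiff ℝ ∞ (fun z => p z * exp (-((b * ‖z‖ ^ 2 / 4 : ℝ) : ℂ))) := by
  have hpR : ContDiff ℝ ∞ p := hp.contDiff.restrict_scalars ℝ
  have hc : ContDiff ℝ ∞ (conj : ℂ → ℂ) := conjCLE.contDiff
  simp only [ofReal_neg_gaussian_exponent]
  fun_prop

theorem annQ_mul_gaussian (hp : Differentiable ℂ p) :
    annQ b (fun z => p z * exp (-((b * ‖z‖ ^ 2 / 4 : ℝ) : ℂ))) = 0 := by
  have hpR : Differentiable ℝ p := hp.restrictScalars ℝ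
  have hc : Differentiable ℝ (conj : ℂ → ℂ) := conjCLE.differentiable
  funext z
  simp only [ofReal_neg_gaussian_exponent]
  simp (disch := fun_prop) only [annQ, wdzbar, pd_mul, pd_cexp, pd_conj, pd_id,
    pd_const, pd_eq_mul_deriv (hp z), map_one, conj_I, Pi.zero_apply]
  ring_nf
  simp only [I_pow_three]
  ring

end GroundStates

section Ladder

variable {b : ℝ} {f : ℂ → ℂ}

theorem contDiff_iterate_creQ (hf : ContDiff ℝ ∞ f) (n : ℕ) : ContDiff ℝ ∞ ((creQ b)^[n] f) := by
  induction n with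
  | zero => exact hf
  | succ n ih =>
    rw [Function.iterate_succ_apply']
    exact contDiff_creQ ih le_rfl

theorem annQ_iterate_creQ_succ (hf : ContDiff ℝ ∞ f) (hann : annQ b f = 0) (n : ℕ) :
    annQ b ((creQ b)^[n + 1] f) = (2 * (n + 1) * b : ℂ) • (creQ b)^[n] f := by
  have hC2 (m : ℕ) : ContDiff ℝ 2 ((creQ b)^[m] f) :=
    (contDiff_iterate_creQ hf m).of_le ENat.LEInfty.out
  induction n with
  | zero =>
    funext z
    rw [Function.iterate_one, annQ_creQ_eq_creQ_annQ_add (f := f) (hC2 0) z, hann, creQ_zero]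
    simp
  | succ n ih =>
    funext z
    rw [Function.iterate_succ_apply', annQ_creQ_eq_creQ_annQ_add (hC2 (n + 1)) z, ih,
      creQ_const_smul ((hC2 n).differentiable two_ne_zero), ← Function.iterate_succ_apply' (creQ b)]
    simp only [Pi.smul_apply, smul_eq_mul]
    push_cast
    ring

theorem landau_iterate_creQ (hf : ContDiff ℝ ∞ f) (hann : annQ b f = 0) (n : ℕ) :
    landau b ((creQ b)^[n] f) = ((2 * n + 1) * b : ℂ) • (creQ b)^[n] f := by
  funext z
  rw [landau_eq_creQ_annQ_add ((contDiff_iterate_creQ hf n).of_le ENat.LEInfty.out) z]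
  cases n with
  | zero => simp [hann, creQ_zero]
  | succ n =>
    rw [annQ_iterate_creQ_succ hf hann n, creQ_const_smul
      ((contDiff_iterate_creQ hf n).differentiable (by simp)), ← Function.iterate_succ_apply' (creQ b)]
    simp only [Pi.smul_apply, smul_eq_mul]
    push_cast
    ring

end Ladder

theorem landau_level_eigenfunctions_general (b : ℝ)
    (p : ℂ → ℂ) (hp : Differentiable ℂ p) (n : ℕ) (g : ℂ → ℂ)
    (hg : g = (creQ b)^[n]
        (fun z : ℂ => p z * Complex.exp (-((b * ‖z‖ ^ 2 / 4 : ℝ) : ℂ)))) :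
    ∀ x : ℂ, landau b g x = ((2 * n + 1 : ℝ) : ℂ) * (b : ℂ) * g x := by
  intro x
  rw [hg, landau_iterate_creQ (contDiff_mul_gaussian hp) (annQ_mul_gaussian hp) n,
    Pi.smul_apply, smul_eq_mul]
  push_cast
  rfl

/-- For every entire function `p` and every `n ∈ ℕ`, the function
`g = Q̄ⁿ(p(z) exp(−b|z|²/4))` satisfies `L g = (2n+1) b g`; thus every Landau level
`Λ_{n+1} = (2n+1)b` admits smooth eigenfunctions of the Landau Hamiltonian. -/
theorem landau_level_eigenfunctions (b : ℝ) (hb : 0 < b)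
    (p : ℂ → ℂ) (hp : Differentiable ℂ p) (n : ℕ) (g : ℂ → ℂ)
    (hg : g = (creQ b)^[n]
        (fun z : ℂ => p z * Complex.exp (-((b * ‖z‖ ^ 2 / 4 : ℝ) : ℂ)))) :
    ∀ x : ℂ, landau b g x = ((2 * n + 1 : ℝ) : ℂ) * (b : ℂ) * g x :=
  landau_level_eigenfunctions_general b p hp n g hg
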